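/- For p = 2: let α₁, α₂ > -1 with α₁ - α₂ ∉ ℤ and n₁, n₂ ∈ ℕ. Define L^{(i)}(x) = (-1)^{n₁+n₂-1} \frac{1}{(n_i-1)! Γ(α_i+1) (α̂_i-α_i)_{n̂_i}} \, {}_2F_2(-n_i+1, α_i-α̂_i-n̂_i+1; α_i+1, α_i-α̂_i+1; x), with (α̂₁,n̂₁)=(α₂,n₂) and (α̂₂,n̂₂)=(α₁,n₁). Then ∑_{i=1}^2 ∫₀^∞ x^j L^{(i)}(x) e^{-x} x^{α_i} dx equals 0 for j ∈ {0,…,n₁+n₂-2} and 1 for j = n₁+n₂-1. -/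

import Mathlib

open Finset Polynomial MeasureTheory Real

/-- Pochhammer symbol `(x)ₙ` on `ℝ`. -/
noncomputable def poch (x : ℝ) (n : ℕ) : ℝ := ∏ s ∈ Finset.range n, (x + s)

/-- The type I Laguerre polynomial of the first kind for two weights, with parameters
`(α, α̂)` and degrees `(n, n̂)` (here `α, n` are the data of the chosen index `i`
and `α̂, n̂` those of the other index). -/
noncomputable def Lag2 (α αh : ℝ) (n nh : ℕ) (x : ℝ) : ℝ :=
  (-1) ^ (n + nh - 1) *
    (1 / (((n - 1).factorial : ℝ) * Real.Gamma (α + 1) * poch (αh - α) nh)) *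
    ∑ l ∈ Finset.range n,
      poch (-(n : ℝ) + 1) l * poch (α - αh - nh + 1) l /
        (poch (α + 1) l * poch (α - αh + 1) l * (l.factorial : ℝ)) * x ^ l

section helpers

lemma poch_succ (x : ℝ) (n : ℕ) : poch x (n+1) = poch x n * (x + n) := by
  simp [poch, Finset.prod_range_succ]

lemma poch_succ' (x : ℝ) (n : ℕ) : poch x (n+1) = x * poch (x+1) n := by
  rw [poch, Finset.prod_range_succ']
  simp only [Nat.cast_zero, add_zero, mul_comm]
  congr 1
  apply Finset.prod_congr rfl
  intro i _
  push_cast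
  ring

lemma poch_add (x : ℝ) (a b : ℕ) : poch x (a+b) = poch x a * poch (x+a) b := by
  simp only [poch]
  rw [Finset.prod_range_add]
  congr 1
  apply Finset.prod_congr rfl
  intro i _
  push_cast; ring

lemma poch_pos {x : ℝ} (hx : 0 < x) (n : ℕ) : 0 < poch x n := by
  apply Finset.prod_pos
  intro i _
  positivity

lemma poch_one (n : ℕ) : poch 1 n = n.factorial := by
  induction n with
  | zero => simp [poch]
  | succ n ih => rw [poch_succ, ih, Nat.factorial_succ]; push_cast; ring

lemma poch_desc (x : ℝ) (k : ℕ) : ∏ i ∈ Finset.range k, (x - i) = poch (x - k + 1) k := by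
  induction k with
  | zero => simp [poch]
  | succ k ih =>
    rw [Finset.prod_range_succ, ih]
    have h0 : ((k+1 : ℕ) : ℝ) = (k:ℝ)+1 := by push_cast; ring
    rw [h0]
    have h1 : x - ((k:ℝ)+1) + 1 = x - k := by ring
    rw [h1, poch_succ', mul_comm]

lemma poch_fact (c d : ℕ) : (c.factorial : ℝ) * poch (c+1) d = ((c+d).factorial : ℝ) := by
  induction d with
  | zero => simp [poch]
  | succ d ih =>
    rw [poch_succ, ← mul_assoc, ih, show c + (d+1) = (c+d)+1 from rfl, Nat.factorial_succ]
    push_cast; ring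

lemma Gamma_poch {x : ℝ} (hx : 0 < x) (n : ℕ) : Real.Gamma (x + n) = Real.Gamma x * poch x n := by
  induction n with
  | zero => simp [poch]
  | succ n ih =>
    have h0 : x + ((n+1 : ℕ) : ℝ) = (x + n) + 1 := by push_cast; ring
    rw [h0, Real.Gamma_add_one (by positivity), ih, poch_succ]
    ring

lemma prod_neg_range (r : ℕ) : ∏ i ∈ Finset.range r, (-((i:ℝ)+1)) = (-1)^r * r.factorial := by
  induction r with
  | zero => simp
  | succ r ih => rw [Finset.prod_range_succ, ih, Nat.factorial_succ, pow_succ]; push_cast; ring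

lemma prod_range_id_sub (l : ℕ) : ∏ i ∈ Finset.range l, ((l:ℝ) - i) = l.factorial := by
  rw [poch_desc]
  have : (l:ℝ) - l + 1 = 1 := by ring
  rw [this, poch_one]

lemma prod_erase_range {m l : ℕ} (hl : l < m) :
    ∏ i ∈ (Finset.range m).erase l, ((l:ℝ) - i)
      = (-1)^(m-1-l) * l.factorial * (m-1-l).factorial := by
  have hsplit : (Finset.range m).erase l = Finset.range l ∪ Finset.Ico (l+1) m := by
    ext x; simp only [Finset.mem_erase, Finset.mem_range, Finset.mem_union, Finset.mem_Ico]; omega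
  have hdisj : Disjoint (Finset.range l) (Finset.Ico (l+1) m) := by
    rw [Finset.disjoint_left]; intro x hx hx'
    simp only [Finset.mem_range] at hx
    simp only [Finset.mem_Ico] at hx'
    omega
  rw [hsplit, Finset.prod_union hdisj, prod_range_id_sub, Finset.prod_Ico_eq_prod_range]
  have h2 : ∀ i ∈ Finset.range (m - (l+1)), ((l:ℝ) - ((l+1+i : ℕ):ℝ)) = -((i:ℝ)+1) := by
    intro i _; push_cast; ring
  rw [Finset.prod_congr rfl h2, prod_neg_range]
  have : m - (l+1) = m - 1 - l := by omega
  rw [this]; ring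

lemma erase_range_add_left {m k l : ℕ} (hl : l < m) (g : ℕ → ℝ) :
    ∏ i ∈ (Finset.range (m+k)).erase l, g i
      = (∏ i ∈ (Finset.range m).erase l, g i) * ∏ i ∈ Finset.range k, g (m+i) := by
  have hsplit : (Finset.range (m+k)).erase l = (Finset.range m).erase l ∪ Finset.Ico m (m+k) := by
    ext x; simp only [Finset.mem_erase, Finset.mem_range, Finset.mem_union, Finset.mem_Ico]; omega
  have hdisj : Disjoint ((Finset.range m).erase l) (Finset.Ico m (m+k)) := by
    rw [Finset.disjoint_left]; intro x hx hx'
    simp only [Finset.mem_erase, Finset.mem_range] at hx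
    simp only [Finset.mem_Ico] at hx'
    omega
  rw [hsplit, Finset.prod_union hdisj, Finset.prod_Ico_eq_prod_range]
  simp

lemma erase_range_add_right {m k l : ℕ} (hl : l < k) (g : ℕ → ℝ) :
    ∏ i ∈ (Finset.range (m+k)).erase (m+l), g i
      = (∏ i ∈ Finset.range m, g i) * ∏ i ∈ (Finset.range k).erase l, g (m+i) := by
  have hsplit : (Finset.range (m+k)).erase (m+l)
      = Finset.range m ∪ ((Finset.range k).erase l).map ⟨(m + ·), add_right_injective m⟩ := by
    ext x
    simp only [Finset.mem_erase, Finset.mem_range, Finset.mem_union, Finset.mem_map,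
      Function.Embedding.coeFn_mk]
    constructor
    · rintro ⟨hx, hxr⟩
      by_cases hxm : x < m
      · exact Or.inl hxm
      · exact Or.inr ⟨x - m, ⟨by omega, by omega⟩, by omega⟩
    · rintro (h | ⟨a, ⟨ha1, ha2⟩, rfl⟩) <;> constructor <;> omega
  have hdisj : Disjoint (Finset.range m)
      (((Finset.range k).erase l).map ⟨(m + ·), add_right_injective m⟩) := by
    rw [Finset.disjoint_left]; intro x hx hx'
    simp only [Finset.mem_range] at hx
    simp only [Finset.mem_map, Function.Embedding.coeFn_mk] at hx'
    obtain ⟨a, _, rfl⟩ := hx'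
    omega
  rw [hsplit, Finset.prod_union hdisj, Finset.prod_map]
  simp

lemma prod_neg_eq (r : ℕ) (f : ℕ → ℝ) :
    ∏ i ∈ Finset.range r, (-(f i)) = (-1)^r * ∏ i ∈ Finset.range r, f i := by
  induction r with
  | zero => simp
  | succ r ih => rw [Finset.prod_range_succ, ih, Finset.prod_range_succ, pow_succ]; ring

lemma coeff_lagrange_basis {ι : Type*} [DecidableEq ι] {s : Finset ι} {v : ι → ℝ}
    {i : ι} (hi : i ∈ s) :
    (Lagrange.basis s v i).coeff (s.card - 1) = (∏ j ∈ s.erase i, (v i - v j))⁻¹ := by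
  have key : Lagrange.basis s v i
      = C ((∏ j ∈ s.erase i, (v i - v j))⁻¹) * ∏ j ∈ s.erase i, (X - C (v j)) := by
    unfold Lagrange.basis Lagrange.basisDivisor
    rw [Finset.prod_mul_distrib, ← Finset.prod_inv_distrib, ← map_prod]
  have hm : (∏ j ∈ s.erase i, (X - C (v j))).Monic :=
    monic_prod_of_monic _ _ (fun j _ => monic_X_sub_C _)
  have hd : (∏ j ∈ s.erase i, (X - C (v j))).natDegree = s.card - 1 := by
    rw [natDegree_prod_of_monic _ _ (fun j _ => monic_X_sub_C _)]
    simp [Finset.card_erase_of_mem hi]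
  rw [key, Polynomial.coeff_C_mul, ← hd, hm.coeff_natDegree, mul_one]

lemma sum_eval_div_eq_coeff {ι : Type*} [DecidableEq ι] {s : Finset ι} {v : ι → ℝ}
    (hvs : Set.InjOn v s) (f : ℝ[X]) (hf : f.degree < s.card) :
    ∑ i ∈ s, f.eval (v i) * (∏ j ∈ s.erase i, (v i - v j))⁻¹ = f.coeff (s.card - 1) := by
  conv_rhs => rw [Lagrange.eq_interpolate hvs hf]
  rw [Lagrange.interpolate_apply, Polynomial.finset_sum_coeff]
  apply Finset.sum_congr rfl
  intro i hi
  rw [Polynomial.coeff_C_mul, coeff_lagrange_basis hi]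

lemma integral_Lag2 (α αh : ℝ) (hα : -1 < α) (n nh j : ℕ) :
    (∫ x in Set.Ioi (0:ℝ), x ^ j * Lag2 α αh n nh x * (Real.exp (-x) * x ^ α))
      = ∑ l ∈ Finset.range n,
        ((-1) ^ (n + nh - 1) *
          (1 / (((n - 1).factorial : ℝ) * Real.Gamma (α + 1) * poch (αh - α) nh)) *
          (poch (-(n : ℝ) + 1) l * poch (α - αh - nh + 1) l /
            (poch (α + 1) l * poch (α - αh + 1) l * (l.factorial : ℝ)))) *
          (Real.Gamma (α + 1) * poch (α + 1) l * poch (α + 1 + l) j) := by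
  set C : ℝ := (-1) ^ (n + nh - 1) *
      (1 / (((n - 1).factorial : ℝ) * Real.Gamma (α + 1) * poch (αh - α) nh)) with hC
  set c : ℕ → ℝ := fun l => poch (-(n : ℝ) + 1) l * poch (α - αh - nh + 1) l /
        (poch (α + 1) l * poch (α - αh + 1) l * (l.factorial : ℝ)) with hc
  have hpos : ∀ l : ℕ, (0:ℝ) < α + 1 + (j + l : ℕ) := by
    intro l
    have : (0:ℝ) ≤ (j + l : ℕ) := Nat.cast_nonneg _
    linarith
  have heq : Set.EqOn (fun x => x ^ j * Lag2 α αh n nh x * (Real.exp (-x) * x ^ α))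
      (fun x => ∑ l ∈ Finset.range n,
        (C * c l) * (Real.exp (-x) * x ^ (α + 1 + (j + l : ℕ) - 1))) (Set.Ioi 0) := by
    intro x hx
    simp only [Set.mem_Ioi] at hx
    simp only [Lag2, ← hC, hc]
    simp only [Finset.mul_sum, Finset.sum_mul]
    apply Finset.sum_congr rfl
    intro l _
    have hxp : x ^ (α + 1 + (j + l : ℕ) - 1) = x ^ α * x ^ (j + l) := by
      rw [← Real.rpow_natCast x (j + l), ← Real.rpow_add hx]
      congr 1
      push_cast
      ring
    rw [hxp, pow_add]
    ring
  rw [setIntegral_congr_fun measurableSet_Ioi heq]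
  rw [integral_finset_sum]
  · apply Finset.sum_congr rfl
    intro l _
    rw [integral_const_mul, ← Real.Gamma_eq_integral (hpos l)]
    rw [Gamma_poch (by linarith) (j + l), add_comm j l, poch_add]
    ring
  · intro l _
    exact ((Real.GammaIntegral_convergent (hpos l)).const_mul _)

lemma term_eq (a b : ℝ) (ha : -1 < a) (hab : ∀ z : ℤ, a - b ≠ (z:ℝ)) (m k j l : ℕ)
    (hm : 1 ≤ m) (hl : l < m) :
    ((-1:ℝ)) ^ (m + k - 1) *
      (1 / (((m - 1).factorial : ℝ) * Real.Gamma (a + 1) * poch (b - a) k)) *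
      (poch (-(m : ℝ) + 1) l * poch (a - b - k + 1) l /
        (poch (a + 1) l * poch (a - b + 1) l * (l.factorial : ℝ))) *
      (Real.Gamma (a + 1) * poch (a + 1) l * poch (a + 1 + l) j)
    = poch (a + 1 + l) j *
      ((∏ i ∈ (Finset.range m).erase l, ((a + l) - (a + i))) *
       ∏ i ∈ Finset.range k, ((a + l) - (b + i)))⁻¹ := by
  have hQ : ∀ z : ℤ, a - b + (z:ℝ) ≠ 0 := by
    intro z h
    exact hab (-z) (by push_cast; linarith)
  have E1 : (∏ i ∈ (Finset.range m).erase l, ((a + l) - (a + i)))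
      = (-1:ℝ)^(m-1-l) * l.factorial * (m-1-l).factorial := by
    rw [Finset.prod_congr rfl (fun (i : ℕ) _ =>
      show (a + l) - (a + (i:ℝ)) = (l:ℝ) - (i:ℝ) by ring)]
    exact prod_erase_range hl
  have E2 : (∏ i ∈ Finset.range k, ((a + l) - (b + i))) = poch (a - b + l - k + 1) k := by
    rw [Finset.prod_congr rfl (fun (i : ℕ) _ =>
      show (a + l) - (b + (i:ℝ)) = (a - b + (l:ℝ)) - (i:ℝ) by ring), poch_desc]
  have E3 : poch (-(m : ℝ) + 1) l = (-1:ℝ)^l * poch ((m:ℝ) - l) l := by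
    rw [poch, Finset.prod_congr rfl (fun (s : ℕ) _ =>
        show -(m:ℝ) + 1 + (s:ℝ) = -(((m:ℝ)-1) - (s:ℝ)) by ring),
      prod_neg_eq, poch_desc, show (m:ℝ) - 1 - (l:ℝ) + 1 = (m:ℝ) - l by ring]
  have E5 : poch (b - a) k = (-1:ℝ)^k * poch (a - b - k + 1) k := by
    rw [poch, Finset.prod_congr rfl (fun (s : ℕ) _ =>
        show b - a + (s:ℝ) = -((a-b) - (s:ℝ)) by ring),
      prod_neg_eq, poch_desc, show a - b - (k:ℝ) + 1 = a - b - k + 1 by ring]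
  have E4 : ((m-1-l).factorial : ℝ) * poch ((m:ℝ) - l) l = ((m-1).factorial : ℝ) := by
    have h := poch_fact (m-1-l) l
    have hc1 : ((m-1-l : ℕ) : ℝ) + 1 = (m:ℝ) - l := by
      rw [Nat.cast_sub (by omega : l ≤ m - 1), Nat.cast_sub (by omega : 1 ≤ m)]
      push_cast; ring
    have hc2 : m - 1 - l + l = m - 1 := by omega
    rw [hc1, hc2] at h
    exact h
  have E6 : poch (a-b-k+1) l * poch (a-b+l-k+1) k
      = poch (a-b-k+1) k * poch (a-b+1) l := by
    have h1 := poch_add (a-b-(k:ℝ)+1) l k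
    have h2 := poch_add (a-b-(k:ℝ)+1) k l
    rw [show a-b-(k:ℝ)+1+(l:ℝ) = a-b+l-k+1 by ring] at h1
    rw [show a-b-(k:ℝ)+1+(k:ℝ) = a-b+1 by ring] at h2
    rw [Nat.add_comm l k, h2] at h1
    linarith [h1]
  have hsign : ((-1:ℝ)) ^ (m + k - 1) = (-1:ℝ)^(m-1-l) * ((-1:ℝ)^l * (-1:ℝ)^k) := by
    rw [← pow_add, ← pow_add]
    congr 1
    omega
  have hG : Real.Gamma (a+1) ≠ 0 := (Real.Gamma_pos_of_pos (by linarith)).ne'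
  have hP3 : poch (a+1) l ≠ 0 := (poch_pos (by linarith) l).ne'
  have hP4 : poch (a-b+1) l ≠ 0 := by
    rw [poch]
    apply Finset.prod_ne_zero_iff.mpr
    intro s _
    have := hQ (1 + s)
    push_cast at this ⊢
    intro h; apply this; linarith
  have hQk : poch (a-b+l-k+1) k ≠ 0 := by
    rw [poch]
    apply Finset.prod_ne_zero_iff.mpr
    intro s _
    have := hQ ((l:ℤ) - k + 1 + s)
    push_cast at this ⊢
    intro h; apply this; linarith
  have hSk : poch (a-b-k+1) k ≠ 0 := by
    rw [poch]
    apply Finset.prod_ne_zero_iff.mpr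
    intro s _
    have := hQ (-(k:ℤ) + 1 + s)
    push_cast at this ⊢
    intro h; apply this; linarith
  have hfl : (l.factorial : ℝ) ≠ 0 := Nat.cast_ne_zero.mpr l.factorial_ne_zero
  have hfm : (((m-1).factorial : ℕ) : ℝ) ≠ 0 := Nat.cast_ne_zero.mpr (m-1).factorial_ne_zero
  have hfml : (((m-1-l).factorial : ℕ) : ℝ) ≠ 0 := Nat.cast_ne_zero.mpr (m-1-l).factorial_ne_zero
  rw [E1, E2, E3, E5, hsign]
  field_simp
  have hts : ∀ t : ℕ, (-1:ℝ)^(t*2) = 1 := fun t => by rw [mul_comm, pow_mul]; norm_num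
  ring_nf
  rw [hts, hts]
  linear_combination (norm := ring_nf) (poch (1+(l:ℝ)+a) j
      * poch (a - b + (l:ℝ) - k + 1) k
      * poch (a - b - (k:ℝ) + 1) l) * E4
    + (poch (1+(l:ℝ)+a) j
      * ((m-1).factorial : ℝ)) * E6

lemma eval_fj (j : ℕ) (x : ℝ) :
    (∏ t ∈ Finset.range j, (X + C ((t:ℝ)+1))).eval x = poch (x+1) j := by
  rw [Polynomial.eval_prod, poch]
  apply Finset.prod_congr rfl
  intro t _
  simp
  ring

end helpers

/-- Type I orthogonality for the two-weight Laguerre polynomials of the first kind. -/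
theorem laguerreFirstKind_typeI_orthogonality_two (α₁ α₂ : ℝ)
    (h₁ : -1 < α₁) (h₂ : -1 < α₂) (hZ : ∀ z : ℤ, α₁ - α₂ ≠ (z : ℝ))
    (n₁ n₂ : ℕ) (hn₁ : 1 ≤ n₁) (hn₂ : 1 ≤ n₂) :
    (∀ j : ℕ, j + 2 ≤ n₁ + n₂ →
      (∫ x in Set.Ioi (0:ℝ), x ^ j * Lag2 α₁ α₂ n₁ n₂ x * (Real.exp (-x) * x ^ α₁))
        + (∫ x in Set.Ioi (0:ℝ), x ^ j * Lag2 α₂ α₁ n₂ n₁ x * (Real.exp (-x) * x ^ α₂)) = 0)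
    ∧ (∫ x in Set.Ioi (0:ℝ),
          x ^ (n₁ + n₂ - 1) * Lag2 α₁ α₂ n₁ n₂ x * (Real.exp (-x) * x ^ α₁))
        + (∫ x in Set.Ioi (0:ℝ),
            x ^ (n₁ + n₂ - 1) * Lag2 α₂ α₁ n₂ n₁ x * (Real.exp (-x) * x ^ α₂)) = 1 := by
  have hZ' : ∀ z : ℤ, α₂ - α₁ ≠ (z : ℝ) := by
    intro z h
    exact hZ (-z) (by push_cast; linarith)
  have hne : ∀ p q : ℕ, α₁ + (p:ℝ) ≠ α₂ + (q:ℝ) := by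
    intro p q h
    exact hZ ((q:ℤ) - (p:ℤ)) (by push_cast; linarith)
  set N := n₁ + n₂ with hN
  set v : ℕ → ℝ := fun i => if i < n₁ then α₁ + i else α₂ + (i - n₁ : ℕ) with hv
  have hinj : Set.InjOn v (Finset.range N) := by
    intro x hx y hy hxy
    simp only [Finset.coe_range, Set.mem_Iio] at hx hy
    simp only [hv] at hxy
    by_cases hx1 : x < n₁ <;> by_cases hy1 : y < n₁ <;>
      simp only [hx1, hy1, if_pos, if_neg, if_true, if_false] at hxy
    · have : (x:ℝ) = y := by linarith
      exact_mod_cast this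
    · exact ((hne x (y - n₁) hxy).elim)
    · exact ((hne y (x - n₁) hxy.symm).elim)
    · have : ((x - n₁ : ℕ):ℝ) = ((y - n₁ : ℕ):ℝ) := by linarith
      have := Nat.cast_injective this
      omega
  have key : ∀ j : ℕ, j < N →
      (∫ x in Set.Ioi (0:ℝ), x ^ j * Lag2 α₁ α₂ n₁ n₂ x * (Real.exp (-x) * x ^ α₁))
        + (∫ x in Set.Ioi (0:ℝ), x ^ j * Lag2 α₂ α₁ n₂ n₁ x * (Real.exp (-x) * x ^ α₂))
      = (∏ t ∈ Finset.range j, (X + C ((t:ℝ)+1))).coeff (N - 1) := by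
    intro j hj
    set f : ℝ[X] := ∏ t ∈ Finset.range j, (X + C ((t:ℝ)+1)) with hf
    have hfm : f.Monic := monic_prod_of_monic _ _ (fun t _ => monic_X_add_C _)
    have hfd : f.natDegree = j := by
      rw [hf, natDegree_prod_of_monic _ _ (fun t _ => monic_X_add_C _),
        Finset.sum_congr rfl (fun (t : ℕ) _ => natDegree_X_add_C ((t:ℝ)+1)),
        Finset.sum_const, Finset.card_range, smul_eq_mul, mul_one]
    have hdeg : f.degree < (Finset.range N).card := by
      rw [Finset.card_range, degree_eq_natDegree hfm.ne_zero, hfd]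
      exact_mod_cast hj
    have hdd := sum_eval_div_eq_coeff hinj f hdeg
    rw [Finset.card_range] at hdd
    rw [← hdd]
    rw [integral_Lag2 α₁ α₂ h₁ n₁ n₂ j, integral_Lag2 α₂ α₁ h₂ n₂ n₁ j]
    rw [hN, Finset.sum_range_add]
    congr 1
    · -- first family
      apply Finset.sum_congr rfl
      intro l hl
      rw [Finset.mem_range] at hl
      have hvl : v l = α₁ + l := by simp [hv, hl]
      have hbig : (∏ i ∈ (Finset.range (n₁+n₂)).erase l, (α₁ + (l:ℝ) - v i))
          = (∏ i ∈ (Finset.range n₁).erase l, ((α₁ + (l:ℝ)) - (α₁ + (i:ℝ)))) *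
            ∏ i ∈ Finset.range n₂, ((α₁ + (l:ℝ)) - (α₂ + (i:ℝ))) := by
        rw [erase_range_add_left hl (fun i => α₁ + (l:ℝ) - v i)]
        congr 1
        · apply Finset.prod_congr rfl
          intro i hi
          rw [Finset.mem_erase, Finset.mem_range] at hi
          simp [hv, hi.2]
        · apply Finset.prod_congr rfl
          intro i hi
          have h1 : ¬ (n₁ + i < n₁) := by omega
          have h2 : n₁ + i - n₁ = i := by omega
          simp [hv, h1, h2]
      rw [hvl, eval_fj, hbig, show α₁ + (l:ℝ) + 1 = α₁ + 1 + (l:ℝ) by ring]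
      exact term_eq α₁ α₂ h₁ hZ n₁ n₂ j l hn₁ hl
    · -- second family
      apply Finset.sum_congr rfl
      intro l hl
      rw [Finset.mem_range] at hl
      have h1 : ¬ (n₁ + l < n₁) := by omega
      have h2 : n₁ + l - n₁ = l := by omega
      have hvl : v (n₁ + l) = α₂ + l := by simp [hv, h1, h2]
      have hbig : (∏ i ∈ (Finset.range (n₁+n₂)).erase (n₁+l), (α₂ + (l:ℝ) - v i))
          = (∏ i ∈ (Finset.range n₂).erase l, ((α₂ + (l:ℝ)) - (α₂ + (i:ℝ)))) *
            ∏ i ∈ Finset.range n₁, ((α₂ + (l:ℝ)) - (α₁ + (i:ℝ))) := by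
        rw [erase_range_add_right hl (fun i => α₂ + (l:ℝ) - v i), mul_comm]
        congr 1
        · apply Finset.prod_congr rfl
          intro i hi
          rw [Finset.mem_erase, Finset.mem_range] at hi
          have h3 : ¬ (n₁ + i < n₁) := by omega
          have h4 : n₁ + i - n₁ = i := by omega
          simp [hv, h3, h4]
        · apply Finset.prod_congr rfl
          intro i hi
          rw [Finset.mem_range] at hi
          simp [hv, hi]
      rw [hvl, eval_fj, hbig, show α₂ + (l:ℝ) + 1 = α₂ + 1 + (l:ℝ) by ring]
      exact term_eq α₂ α₁ h₂ hZ' n₂ n₁ j l hn₂ hl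
  constructor
  · intro j hjN
    rw [key j (by omega)]
    apply Polynomial.coeff_eq_zero_of_natDegree_lt
    rw [natDegree_prod_of_monic _ _ (fun t _ => monic_X_add_C _),
      Finset.sum_congr rfl (fun (t : ℕ) _ => natDegree_X_add_C ((t:ℝ)+1)),
      Finset.sum_const, Finset.card_range, smul_eq_mul, mul_one]
    omega
  · rw [key (N-1) (by omega)]
    have hfm : (∏ t ∈ Finset.range (N-1), (X + C ((t:ℝ)+1))).Monic :=
      monic_prod_of_monic _ _ (fun t _ => monic_X_add_C _)
    have hfd : (∏ t ∈ Finset.range (N-1), (X + C ((t:ℝ)+1))).natDegree = N - 1 := by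
      rw [natDegree_prod_of_monic _ _ (fun t _ => monic_X_add_C _),
        Finset.sum_congr rfl (fun (t : ℕ) _ => natDegree_X_add_C ((t:ℝ)+1)),
        Finset.sum_const, Finset.card_range, smul_eq_mul, mul_one]
    have h := hfm.coeff_natDegree
    rw [hfd] at h
    exact h
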